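/- Let G ≤ Aut X* be a level-transitive, self-similar group which is regular branch over a subgroup K. Then every non-trivial normal subgroup of G contains Xⁿ*K′ for all n sufficiently large, where K′ = [K,K] is the derived subgroup of K. -/

import Mathlib

open Equiv

/-! ## The binary rooted tree and the twisted twin of the Grigorchuk group

We identify the vertex set of the infinite rooted binary tree with `V = List Bool`
(the free monoid `X*` on `X = {0,1}`), and realize automorphisms of the tree as
permutations of `V`.  The generators `a, b, c, d` of the twisted twin `G` of the
Grigorchuk group are defined by the recursive rules
`a(xw) = (¬x)w`, `ψ(b) = (c,a)`, `ψ(c) = (a,d)`, `ψ(d) = (1,b)`. -/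

abbrev V : Type := List Bool

def actA : V → V
  | [] => []
  | x :: w => (!x) :: w

theorem actA_invol : Function.Involutive actA := fun w => by
  cases w with
  | nil => rfl
  | cons x w => simp [actA]

mutual
  def actB : V → V
    | [] => []
    | false :: w => false :: actC w
    | true :: w => true :: actA w
  def actC : V → V
    | [] => []
    | false :: w => false :: actA w
    | true :: w => true :: actD w
  def actD : V → V
    | [] => []
    | false :: w => false :: w
    | true :: w => true :: actB w
end

theorem act_invol3 (w : V) :
    actB (actB w) = w ∧ actC (actC w) = w ∧ actD (actD w) = w := by
  induction w with
  | nil => exact ⟨rfl, rfl, rfl⟩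
  | cons x w ih =>
    cases x <;>
      exact ⟨by simp [actB, actC, actD, ih.1, ih.2.1, ih.2.2, actA_invol w],
        by simp [actB, actC, actD, ih.1, ih.2.1, ih.2.2, actA_invol w],
        by simp [actB, actC, actD, ih.1, ih.2.1, ih.2.2, actA_invol w]⟩

theorem actB_invol : Function.Involutive actB := fun w => (act_invol3 w).1
theorem actC_invol : Function.Involutive actC := fun w => (act_invol3 w).2.1
theorem actD_invol : Function.Involutive actD := fun w => (act_invol3 w).2.2

/-- The generator `a`: the root swap. -/
def a : Perm V := actA_invol.toPerm actA
/-- The generator `b`, with `ψ(b) = (c, a)`. -/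
def b : Perm V := actB_invol.toPerm actB
/-- The generator `c`, with `ψ(c) = (a, d)`. -/
def c : Perm V := actC_invol.toPerm actC
/-- The generator `d`, with `ψ(d) = (1, b)`. -/
def d : Perm V := actD_invol.toPerm actD

@[simp] theorem coe_a : ⇑a = actA := rfl
@[simp] theorem coe_b : ⇑b = actB := rfl
@[simp] theorem coe_c : ⇑c = actC := rfl
@[simp] theorem coe_d : ⇑d = actD := rfl

/-- The twisted twin of the Grigorchuk group. -/
def G : Subgroup (Perm V) := Subgroup.closure {a, b, c, d}

theorem a_mem_G : a ∈ G := Subgroup.subset_closure (by simp)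
theorem b_mem_G : b ∈ G := Subgroup.subset_closure (by simp)
theorem c_mem_G : c ∈ G := Subgroup.subset_closure (by simp)
theorem d_mem_G : d ∈ G := Subgroup.subset_closure (by simp)

/-- `hasState g v s` says that the state (section) of `g` at the vertex `v` is `s`,
i.e. `g (v ++ w) = g v ++ s w` for all `w`. -/
def hasState (g : Perm V) (v : V) (s : Perm V) : Prop :=
  ∀ w : V, g (v ++ w) = g v ++ s w

def vstarFun (v : V) (f : V → V) : V → V :=
  fun w => if v <+: w then v ++ f (w.drop v.length) else w

theorem vstarFun_comp (v : V) (f f' : V → V) (w : V) :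
    vstarFun v f (vstarFun v f' w) = vstarFun v (f ∘ f') w := by
  by_cases h : v <+: w
  · obtain ⟨t, rfl⟩ := h
    simp [vstarFun, List.prefix_append, List.drop_left]
  · simp [vstarFun, h]

theorem vstarFun_id (v w : V) : vstarFun v id w = w := by
  by_cases h : v <+: w
  · obtain ⟨t, rfl⟩ := h
    simp [vstarFun, List.prefix_append, List.drop_left]
  · simp [vstarFun, h]

/-- `vstar v g` is the automorphism `v * g`, acting as `g` on the subtree rooted
at `v` and trivially elsewhere. -/
def vstar (v : V) (g : Perm V) : Perm V where
  toFun := vstarFun v g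
  invFun := vstarFun v g.symm
  left_inv := fun w => by
    rw [vstarFun_comp, Equiv.symm_comp_self]
    exact vstarFun_id v w
  right_inv := fun w => by
    rw [vstarFun_comp, Equiv.self_comp_symm]
    exact vstarFun_id v w

/-- `XstarSub n H` is the subgroup `Xⁿ * H`: the product of the copies `v * H`
over all vertices `v` of level `n` (equivalently, the subgroup they generate). -/
def XstarSub (n : ℕ) (H : Subgroup (Perm V)) : Subgroup (Perm V) :=
  Subgroup.closure {p | ∃ v : V, ∃ g : Perm V, v.length = n ∧ g ∈ H ∧ p = vstar v g}

/-- `pairPerm s₀ s₁ = ψ⁻¹(s₀, s₁)`: the first-level stabilizer element whose states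
at the vertices `0` and `1` are `s₀` and `s₁`. -/
def pairPerm (s₀ s₁ : Perm V) : Perm V := vstar [false] s₀ * vstar [true] s₁

/-- The permutations fixing every vertex of level `n`. -/
def stabLevel (n : ℕ) : Subgroup (Perm V) where
  carrier := {g : Perm V | ∀ v : V, v.length = n → g v = v}
  one_mem' := fun _ _ => rfl
  mul_mem' := by
    intro g h hg hh v hv
    show g (h v) = v
    rw [hh v hv, hg v hv]
  inv_mem' := by
    intro g hg v hv
    show g⁻¹ v = v
    conv_lhs => rw [← hg v hv]
    exact g.symm_apply_apply v

/-- The `n`-th level stabilizer `Stab_G(n)` of `G`. -/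
def stabG (n : ℕ) : Subgroup (Perm V) := G ⊓ stabLevel n

/-- The commutator `[x, y] = x⁻¹ y⁻¹ x y` (paper convention). -/
def pc (x y : Perm V) : Perm V := x⁻¹ * y⁻¹ * x * y
/-- Conjugation `xʸ = y⁻¹ x y`. -/
def cj (x y : Perm V) : Perm V := y⁻¹ * x * y

/-- The normal closure in `G` of a subset `S` of `G`. -/
def ncl (S : Set (Perm V)) : Subgroup (Perm V) :=
  Subgroup.closure {x | ∃ s ∈ S, ∃ g ∈ G, x = g⁻¹ * s * g}

/-- `K = ⟨[a,b],[b,c],[b,d],[c,d], bcd⟩^G`. -/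
def K : Subgroup (Perm V) := ncl {pc a b, pc b c, pc b d, pc c d, b * c * d}

/-- The subgroup `[K, G]`. -/
def KG : Subgroup (Perm V) := ⁅K, G⁆

/-- The subgroup `C`, generated by `[K,G]` and `[a,b][b,c]`. -/
def Csub : Subgroup (Perm V) := KG ⊔ Subgroup.closure {pc a b * pc b c}

/-- `γ_n(G)`, the `n`-th term of the lower central series of `G` (starting at `γ₁ = G`),
viewed as a subgroup of `Perm V`. -/
def gammaG (n : ℕ) : Subgroup (Perm V) :=
  Subgroup.map G.subtype ((⊤ : Subgroup ↥G).lowerCentralSeries (n - 1))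

/-- `f` induces an automorphism of the rooted binary tree: it preserves the levels and
the prefix (ancestor) relation. -/
def IsTreeAut (f : V → V) : Prop :=
  (∀ v : V, (f v).length = v.length) ∧ ∀ v w : V, f v <+: f (v ++ w)

/-- The automorphism group `Aut X*` of the binary rooted tree, as a subgroup of the
permutations of the vertex set. -/
def autTree : Subgroup (Perm V) where
  carrier := {g : Perm V | IsTreeAut ⇑g}
  one_mem' := ⟨fun _ => rfl, fun v w => by
    show v <+: v ++ w
    exact List.prefix_append v w⟩
  mul_mem' := by
    rintro g h ⟨hg1, hg2⟩ ⟨hh1, hh2⟩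
    constructor
    · intro v
      show (g (h v)).length = v.length
      rw [hg1, hh1]
    · intro v w
      obtain ⟨t, ht⟩ := hh2 v w
      show g (h v) <+: g (h (v ++ w))
      rw [← ht]
      exact hg2 (h v) t
  inv_mem' := by
    rintro g ⟨hg1, hg2⟩
    have hlen : ∀ v : V, (g⁻¹ v).length = v.length := by
      intro v
      have h1 := hg1 (g⁻¹ v)
      rw [show ∀ x, g (g⁻¹ x) = x from fun x => g.apply_symm_apply x] at h1
      exact h1.symm
    constructor
    · exact hlen
    · intro v w
      set u : V := (g⁻¹ (v ++ w)).take v.length with hu_def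
      have hu : u <+: g⁻¹ (v ++ w) := List.take_prefix _ _
      have hulen : u.length = v.length := by
        rw [hu_def, List.length_take, hlen, List.length_append]
        omega
      obtain ⟨t, ht⟩ := hu
      have hpre : g u <+: v ++ w := by
        have h2 := hg2 u t
        rwa [ht, show ∀ x, g (g⁻¹ x) = x from fun x => g.apply_symm_apply x] at h2
      have hgu : g u = v := by
        obtain ⟨r, hr⟩ := hpre
        have h3 : (g u ++ r).take (g u).length = g u := List.take_left
        rw [hr, hg1, hulen] at h3
        rw [← h3, List.take_left]
      have huv : u = g⁻¹ v := by
        rw [← hgu]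
        exact (g.symm_apply_apply u).symm
      rw [← huv, ← ht]
      exact ⟨t, rfl⟩

theorem lenA_aux : ∀ v : V, (actA v).length = v.length := by
  intro v; cases v <;> simp [actA]

theorem prefA_aux : ∀ v w : V, actA v <+: actA (v ++ w) := by
  intro v w
  cases v with
  | nil => simp [actA]
  | cons x v => simp [actA, List.cons_prefix_cons, List.prefix_append]

theorem treelem : ∀ v : V,
    ((actB v).length = v.length ∧
      (actC v).length = v.length ∧ (actD v).length = v.length) ∧
    ∀ w : V, (actB v <+: actB (v ++ w)) ∧
      (actC v <+: actC (v ++ w)) ∧ (actD v <+: actD (v ++ w)) := by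
  intro v
  induction v with
  | nil =>
    refine ⟨⟨rfl, rfl, rfl⟩, fun w => ?_⟩
    simp [actB, actC, actD]
  | cons x v ih =>
    cases x <;>
      refine ⟨⟨?_, ?_, ?_⟩, fun w => ⟨?_, ?_, ?_⟩⟩ <;>
        simp [actB, actC, actD, ih.1.1, ih.1.2.1, ih.1.2.2, lenA_aux v,
          List.cons_prefix_cons, List.prefix_append] <;>
        first
          | exact (ih.2 w).1
          | exact (ih.2 w).2.1
          | exact (ih.2 w).2.2
          | exact prefA_aux v w

theorem a_mem_autTree : a ∈ autTree := ⟨lenA_aux, prefA_aux⟩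
theorem b_mem_autTree : b ∈ autTree :=
  ⟨fun v => (treelem v).1.1, fun v w => ((treelem v).2 w).1⟩
theorem c_mem_autTree : c ∈ autTree :=
  ⟨fun v => (treelem v).1.2.1, fun v w => ((treelem v).2 w).2.1⟩
theorem d_mem_autTree : d ∈ autTree :=
  ⟨fun v => (treelem v).1.2.2, fun v w => ((treelem v).2 w).2.2⟩

theorem G_le_autTree : G ≤ autTree := by
  rw [G, Subgroup.closure_le]
  rintro x hx
  simp only [Set.mem_insert_iff, Set.mem_singleton_iff] at hx
  rcases hx with rfl | rfl | rfl | rfl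
  exacts [a_mem_autTree, b_mem_autTree, c_mem_autTree, d_mem_autTree]

theorem lenG (g : ↥G) (v : V) : ((g : Perm V) v).length = v.length :=
  (G_le_autTree g.2).1 v

/-! If `x ∈ N` moves a vertex `v` and `p, q` act only below `v`, then `r = x p x⁻¹` acts only
below `x v ≠ v`, so `r` commutes with `p` and `q`, and `⁅q, ⁅x, p⁆⁆ = ⁅q, r p⁻¹⁆ = ⁅q, p⁻¹⁆`
lies in `N`. Taking `p, q ∈ v * Ks` (which lies in `Gs` by the branching property) gives
`v * Ks' ≤ N`. A non-trivial element of `N` moves some vertex `u₀`, hence, being a tree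
automorphism, a vertex on every level `n ≥ |u₀|`; by level transitivity some conjugate of it
moves any prescribed vertex of level `n`. -/

open scoped commutatorElement

theorem vstar_apply_append (v : V) (g : Perm V) (w : V) :
    vstar v g (v ++ w) = v ++ g w := by
  show vstarFun v g (v ++ w) = v ++ g w
  simp [vstarFun, List.prefix_append, List.drop_left]

theorem vstar_apply_of_not_prefix (v : V) (g : Perm V) {w : V} (h : ¬ v <+: w) :
    vstar v g w = w := by
  show vstarFun v g w = w
  simp [vstarFun, h]

theorem vstar_nil (g : Perm V) : vstar [] g = g :=
  Equiv.ext fun w => by simp [vstar, vstarFun]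

theorem vstar_mul (v : V) (g h : Perm V) :
    vstar v (g * h) = vstar v g * vstar v h :=
  Equiv.ext fun w => (vstarFun_comp v g h w).symm

def vstarHom (v : V) : Perm V →* Perm V where
  toFun := vstar v
  map_one' := Equiv.ext (vstarFun_id v)
  map_mul' := vstar_mul v

theorem vstar_inv (v : V) (g : Perm V) : vstar v g⁻¹ = (vstar v g)⁻¹ :=
  (vstarHom v).map_inv g

theorem vstar_commutatorElement (v : V) (g h : Perm V) :
    vstar v ⁅g, h⁆ = ⁅vstar v g, vstar v h⁆ :=
  map_commutatorElement (vstarHom v) g h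

theorem vstar_append (u t : V) (g : Perm V) :
    vstar (u ++ t) g = vstar u (vstar t g) := by
  refine Equiv.ext fun w => ?_
  by_cases hu : u <+: w
  · obtain ⟨r, rfl⟩ := hu
    by_cases ht : t <+: r
    · obtain ⟨r', rfl⟩ := ht
      rw [vstar_apply_append, vstar_apply_append, ← List.append_assoc,
        vstar_apply_append, List.append_assoc]
    · have hut : ¬ u ++ t <+: u ++ r := fun h => ht ((List.prefix_append_right_inj u).mp h)
      rw [vstar_apply_of_not_prefix _ _ hut, vstar_apply_append,
        vstar_apply_of_not_prefix _ _ ht]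
  · have hut : ¬ u ++ t <+: w := fun h => hu ((u.prefix_append t).trans h)
    rw [vstar_apply_of_not_prefix _ _ hut, vstar_apply_of_not_prefix _ _ hu]

theorem not_prefix_append_of_length_eq {v' v : V} (r : V) (hlen : v'.length = v.length)
    (hne : v' ≠ v) : ¬ v' <+: v ++ r := by
  intro h
  rw [List.prefix_iff_eq_take.mp h, hlen, List.take_left] at hne
  exact hne rfl

theorem vstar_commute {v v' : V} (hlen : v.length = v'.length) (hne : v ≠ v')
    (g g' : Perm V) : Commute (vstar v g) (vstar v' g') := by
  refine Equiv.ext fun w => ?_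
  show vstar v g (vstar v' g' w) = vstar v' g' (vstar v g w)
  by_cases hv : v <+: w
  · obtain ⟨r, rfl⟩ := hv
    rw [vstar_apply_of_not_prefix _ _ (not_prefix_append_of_length_eq r hlen.symm hne.symm),
      vstar_apply_append,
      vstar_apply_of_not_prefix _ _ (not_prefix_append_of_length_eq _ hlen.symm hne.symm)]
  · by_cases hv' : v' <+: w
    · obtain ⟨r, rfl⟩ := hv'
      rw [vstar_apply_append,
        vstar_apply_of_not_prefix _ _ (not_prefix_append_of_length_eq _ hlen hne),
        vstar_apply_of_not_prefix _ _ hv, vstar_apply_append]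
    · rw [vstar_apply_of_not_prefix _ _ hv', vstar_apply_of_not_prefix _ _ hv,
        vstar_apply_of_not_prefix _ _ hv']

theorem conj_vstar_of_hasState {x s : Perm V} {v : V} (hs : hasState x v s) (k : Perm V) :
    x * vstar v k * x⁻¹ = vstar (x v) (s * k * s⁻¹) := by
  refine Equiv.ext fun w => ?_
  show x (vstar v k (x⁻¹ w)) = vstar (x v) (s * k * s⁻¹) w
  by_cases hw : x v <+: w
  · obtain ⟨r, rfl⟩ := hw
    have hx : x⁻¹ (x v ++ r) = v ++ s⁻¹ r := x.injective (by rw [hs]; simp)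
    rw [hx, vstar_apply_append, hs, vstar_apply_append]
    simp [Perm.mul_apply]
  · have hv : ¬ v <+: x⁻¹ w := by
      rintro ⟨r, hr⟩
      have hw' : w = x v ++ s r := by rw [← hs, hr]; simp
      exact hw (hw' ▸ List.prefix_append _ _)
    rw [vstar_apply_of_not_prefix _ _ hv, vstar_apply_of_not_prefix _ _ hw]
    simp

theorem vstar_mem_of_XstarSub_one_le {H : Subgroup (Perm V)} (hH : XstarSub 1 H ≤ H) (v : V)
    {k : Perm V} (hk : k ∈ H) : vstar v k ∈ H := by
  induction v with
  | nil => rwa [vstar_nil]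
  | cons y u ih =>
    rw [← List.singleton_append, vstar_append]
    exact hH (Subgroup.subset_closure ⟨[y], vstar u k, rfl, ih, rfl⟩)

theorem commutatorElement_inv_mem_of_commute {M : Type*} [Group M] {H N : Subgroup M}
    (hN : ∀ g ∈ H, ∀ x ∈ N, g * x * g⁻¹ ∈ N) {x p q : M} (hx : x ∈ N) (hp : p ∈ H)
    (hq : q ∈ H) (hrp : Commute (x * p * x⁻¹) p) (hrq : Commute (x * p * x⁻¹) q) :
    ⁅q, p⁻¹⁆ ∈ N := by
  have hxp : ⁅x, p⁆ ∈ N := by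
    convert N.mul_mem hx (hN p hp _ (N.inv_mem hx)) using 1
    group
  have hqxp : ⁅q, ⁅x, p⁆⁆ ∈ N := by
    rw [commutatorElement_def]
    exact N.mul_mem (hN q hq _ hxp) (N.inv_mem hxp)
  set r := x * p * x⁻¹
  have hr : Commute r ⁅q, p⁻¹⁆ := by
    rw [commutatorElement_def, inv_inv]
    exact ((hrq.mul_right hrp.inv_right).mul_right hrq.inv_right).mul_right hrp
  suffices ⁅q, p⁻¹⁆ = ⁅q, ⁅x, p⁆⁆ from this ▸ hqxp
  calc ⁅q, p⁻¹⁆ = r * ⁅q, p⁻¹⁆ * r⁻¹ := by rw [hr.eq, mul_inv_cancel_right]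
    _ = q * (r * p⁻¹) * q⁻¹ * (r * p⁻¹)⁻¹ := by
      simp only [commutatorElement_def, inv_inv, ← mul_assoc]
      rw [hrq.eq]
      group
    _ = ⁅q, ⁅x, p⁆⁆ := rfl

theorem vstar_commutatorElement_mem {H N : Subgroup (Perm V)}
    (hN : ∀ g ∈ H, ∀ x ∈ N, g * x * g⁻¹ ∈ N) {x s : Perm V} {v : V} (hx : x ∈ N)
    (hs : hasState x v s) (hxv : x v ≠ v) (hlen : (x v).length = v.length) {k₁ k₂ : Perm V}
    (hk₁ : vstar v k₁ ∈ H) (hk₂ : vstar v k₂ ∈ H) : vstar v ⁅k₁, k₂⁆ ∈ N := by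
  have hr : ∀ k, Commute (x * vstar v k₂⁻¹ * x⁻¹) (vstar v k) := fun k => by
    rw [conj_vstar_of_hasState hs]
    exact vstar_commute hlen hxv _ _
  have hk₂' : vstar v k₂⁻¹ ∈ H := by rw [vstar_inv]; exact H.inv_mem hk₂
  simpa [← vstar_inv, vstar_commutatorElement] using
    commutatorElement_inv_mem_of_commute hN hx hk₂' hk₁ (hr _) (hr _)

theorem apply_append_ne_of_mem_autTree {g : Perm V} (hg : g ∈ autTree) {u : V} (hu : g u ≠ u)
    (w : V) : g (u ++ w) ≠ u ++ w := by
  intro h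
  apply hu
  have hpre := List.prefix_iff_eq_take.mp (hg.2 u w)
  rw [hg.1 u, h, List.take_left] at hpre
  exact hpre

theorem exists_mem_apply_ne_of_isLevelTransitive {Gs N : Subgroup (Perm V)}
    (htree : Gs ≤ autTree) (hlevtrans : ∀ v w : V, v.length = w.length → ∃ g ∈ Gs, g v = w)
    (hN : ∀ g ∈ Gs, ∀ x ∈ N, g * x * g⁻¹ ∈ N) {g : Perm V} (hgN : g ∈ N) (hgG : g ∈ Gs)
    {u : V} (hu : g u ≠ u) {v : V} (hv : u.length ≤ v.length) : ∃ x ∈ N, x v ≠ v := by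
  obtain ⟨h, hhG, hhv⟩ :=
    hlevtrans v (u ++ List.replicate (v.length - u.length) false) (by simp; omega)
  refine ⟨h⁻¹ * g * h, by simpa using hN h⁻¹ (inv_mem hhG) g hgN, fun hfix => ?_⟩
  apply apply_append_ne_of_mem_autTree (htree hgG) hu
  rw [← hhv]
  simpa [Perm.mul_apply] using congrArg h hfix

/-- **Lemma.** Let `Gs ≤ Aut X*` be a level-transitive, self-similar group which is
regular branch over `Ks`.  Then every non-trivial normal subgroup of `Gs` contains
`Xⁿ*Ks'` for all `n` big enough, where `Ks' = [Ks, Ks]`. -/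
theorem stmt10 (Gs Ks : Subgroup (Perm V))
    (htree : Gs ≤ autTree)
    (hKsub : Ks ≤ Gs)
    (hlevtrans : ∀ v w : V, v.length = w.length → ∃ g ∈ Gs, g v = w)
    (hselfsim : ∀ g ∈ Gs, ∀ v : V, ∃ s ∈ Gs, hasState g v s)
    (hKnontriv : Ks ≠ ⊥)
    (hbranching : XstarSub 1 Ks ≤ Ks)
    (hfinindex : ∀ n : ℕ, (XstarSub n Ks).relIndex Gs ≠ 0) :
    ∀ N : Subgroup (Perm V), N ≤ Gs →
      (∀ g ∈ Gs, ∀ x ∈ N, g * x * g⁻¹ ∈ N) → N ≠ ⊥ →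
      ∃ n₀ : ℕ, ∀ n : ℕ, n₀ ≤ n → XstarSub n ⁅Ks, Ks⁆ ≤ N := by
  intro N hNle hnorm hNbot
  obtain ⟨g, hgN, hg⟩ := N.bot_or_exists_ne_one.resolve_left hNbot
  obtain ⟨u, hu⟩ : ∃ u, g u ≠ u := by
    by_contra! h
    exact hg (Equiv.ext h)
  refine ⟨u.length, fun n hn => ?_⟩
  rw [XstarSub, Subgroup.closure_le]
  rintro _ ⟨v, k, rfl, hk, rfl⟩
  obtain ⟨x, hxN, hxv⟩ :=
    exists_mem_apply_ne_of_isLevelTransitive htree hlevtrans hnorm hgN (hNle hgN) hu hn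
  obtain ⟨s, -, hs⟩ := hselfsim x (hNle hxN) v
  suffices ⁅Ks, Ks⁆ ≤ N.comap (vstarHom v) from this hk
  rw [Subgroup.commutator_le]
  intro k₁ hk₁ k₂ hk₂
  exact vstar_commutatorElement_mem hnorm hxN hs hxv (htree (hNle hxN) |>.1 v)
    (hKsub (vstar_mem_of_XstarSub_one_le hbranching v hk₁))
    (hKsub (vstar_mem_of_XstarSub_one_le hbranching v hk₂))
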